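/- Fix a positive integer k. Then χ_L(S_n(k)) = Θ(n^{1/k}) as n → ∞; that is, there exist constants A, B > 0 and an integer N such that A·n^{1/k} ≤ χ_L(S_n(k)) ≤ B·n^{1/k} for all n ≥ N. -/

import Mathlib

open SimpleGraph

/-- Distance from a vertex to a set of vertices, `d(u,S) = min {d(u,v) : v ∈ S}`. -/
noncomputable def distToSet {V : Type*} (G : SimpleGraph V) (u : V) (S : Set V) : ℕ :=
  sInf (G.dist u '' S)

/-- `c` is a locating coloring of `G` with `k` colors: a proper coloring such that any two
distinct vertices are resolved by some color class. -/
def IsLocatingColoring {V : Type*} (G : SimpleGraph V) {k : ℕ} (c : V → Fin k) : Prop :=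
  (∀ u v : V, G.Adj u v → c u ≠ c v) ∧
  ∀ u v : V, u ≠ v →
    ∃ i : Fin k, distToSet G u (c ⁻¹' {i}) ≠ distToSet G v (c ⁻¹' {i})

/-- The locating chromatic number `χ_L(G)`: the least `k` admitting a locating `k`-coloring. -/
noncomputable def locatingChromaticNumber {V : Type*} (G : SimpleGraph V) : ℕ :=
  sInf {k : ℕ | ∃ c : V → Fin k, IsLocatingColoring G c}

/-- The vertex set of the palm `S_n(a_1, …, a_n)`: a hub `none` and, for each leg
`i : Fin n` (representing leg `i+1`), vertices `j : Fin (a (i+1))`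
(vertex `some ⟨i, j⟩` represents `a_{i+1, j+1}`). -/
def PalmVert (n : ℕ) (a : ℕ → ℕ) : Type :=
  Option ((i : Fin n) × Fin (a ((i : ℕ) + 1)))

/-- The palm `S_n(a_1, …, a_n)`: the star `K_{1,n}` whose `i`-th edge has been subdivided
`a_i - 1` times; the hub is joined to the first vertex of each leg, and consecutive
vertices along a leg are adjacent. -/
def Palm (n : ℕ) (a : ℕ → ℕ) : SimpleGraph (PalmVert n a) :=
  SimpleGraph.fromRel fun u v =>
    match u, v with
    | none, some ⟨_, j⟩ => (j : ℕ) = 0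
    | some ⟨i, j⟩, some ⟨i', j'⟩ => (i : ℕ) = (i' : ℕ) ∧ (j' : ℕ) = (j : ℕ) + 1
    | _, _ => False

/-!
If `c` is a locating coloring of `S_n(k)` with `M` colors, no two legs carry the same sequence of
colors: swapping two such legs is an automorphism fixing every color class, so it would leave their
first vertices unresolved. Hence `n ≤ M ^ k`.

Conversely, if `n ≤ m ^ k`, give each leg `i` a distinct code `code i : Fin k → Fin m`, color the
hub `0` and the `j`-th vertex of leg `i` by the pair `(j, code i j)`, which uses `k * m + 1`
colors. The class of the hub reads off the depth of a vertex, and two vertices of equal depth on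
legs `i ≠ i'` are resolved by the class of `(d, code i d)` for a position `d` where the codes
differ: it meets leg `i` but avoids leg `i'`. Taking `m = ⌈n^{1/k}⌉` gives
`n^{1/k} ≤ χ_L(S_n(k)) ≤ (2k+1) n^{1/k}`.
-/

namespace SimpleGraph

variable {V W : Type*} {G : SimpleGraph V} {H : SimpleGraph W}

lemma Hom.edist_le (f : G →g H) (u v : V) : H.edist (f u) (f v) ≤ G.edist u v :=
  le_iInf fun p => (p.map f).edist_le.trans_eq (by rw [Walk.length_map])

lemma Iso.edist_apply (φ : G ≃g H) (u v : V) : H.edist (φ u) (φ v) = G.edist u v := by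
  refine le_antisymm (Hom.edist_le φ.toHom u v) ?_
  simpa using Hom.edist_le φ.symm.toHom (φ u) (φ v)

lemma Iso.dist_apply (φ : G ≃g H) (u v : V) : H.dist (φ u) (φ v) = G.dist u v := by
  rw [dist, dist, φ.edist_apply]

lemma Walk.abs_sub_le_length {f : V → ℤ} (hf : ∀ ⦃u v⦄, G.Adj u v → |f u - f v| ≤ 1) {u v : V}
    (p : G.Walk u v) : |f u - f v| ≤ p.length := by
  induction p with
  | nil => simp
  | @cons a b c h q ih =>
    calc |f a - f c| ≤ |f a - f b| + |f b - f c| := abs_sub_le _ _ _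
      _ ≤ 1 + q.length := add_le_add (hf h) ih
      _ = (cons h q).length := by rw [length_cons]; push_cast; ring

lemma Reachable.abs_sub_le_dist {f : V → ℤ} (hf : ∀ ⦃u v⦄, G.Adj u v → |f u - f v| ≤ 1)
    {u v : V} (h : G.Reachable u v) : |f u - f v| ≤ G.dist u v := by
  obtain ⟨p, hp⟩ := h.exists_walk_length_eq_dist
  exact hp ▸ p.abs_sub_le_length hf

end SimpleGraph

section distToSet

variable {V W : Type*} {G : SimpleGraph V} {H : SimpleGraph W}

lemma distToSet_le_dist {u w : V} {S : Set V} (hw : w ∈ S) : distToSet G u S ≤ G.dist u w :=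
  Nat.sInf_le ⟨w, hw, rfl⟩

lemma le_distToSet {u : V} {S : Set V} {b : ℕ} (hS : S.Nonempty)
    (h : ∀ w ∈ S, b ≤ G.dist u w) : b ≤ distToSet G u S :=
  le_csInf (hS.image _) (by rintro _ ⟨w, hw, rfl⟩; exact h w hw)

lemma distToSet_singleton (u w : V) : distToSet G u {w} = G.dist u w := by
  simp [distToSet]

lemma SimpleGraph.Iso.distToSet_apply (φ : G ≃g H) (u : V) (T : Set W) :
    distToSet H (φ u) T = distToSet G u (φ ⁻¹' T) := by
  rw [distToSet, distToSet]
  conv_lhs => rw [← Set.image_preimage_eq T φ.surjective, Set.image_image]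
  simp only [φ.dist_apply]

end distToSet

section locating

variable {V : Type*} {G : SimpleGraph V} {K : ℕ} {c : V → Fin K}

lemma IsLocatingColoring.apply_eq_self_of_comp_eq (hc : IsLocatingColoring G c) (φ : G ≃g G)
    (hφ : c ∘ φ = c) (u : V) : φ u = u := by
  by_contra h
  obtain ⟨i, hi⟩ := hc.2 _ _ h
  exact hi (by rw [φ.distToSet_apply, ← Set.preimage_comp, hφ])

lemma locatingChromaticNumber_le (hc : IsLocatingColoring G c) :
    locatingChromaticNumber G ≤ K :=
  Nat.sInf_le ⟨c, hc⟩

lemma exists_isLocatingColoring_locatingChromaticNumber (hc : IsLocatingColoring G c) :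
    ∃ c' : V → Fin (locatingChromaticNumber G), IsLocatingColoring G c' :=
  Nat.sInf_mem (s := {k | ∃ c : V → Fin k, IsLocatingColoring G c}) ⟨K, c, hc⟩

end locating

abbrev regularPalm (n k : ℕ) : SimpleGraph (PalmVert n fun _ => k) := Palm n fun _ => k

namespace PalmVert

variable {n : ℕ} {a : ℕ → ℕ}

def depth : PalmVert n a → ℕ
  | none => 0
  | some x => x.2 + 1

-- Signed depth, positive exactly on leg `i₀`; being 1-Lipschitz along edges, it bounds
-- distances from below.
def legPotential (i₀ : Fin n) : PalmVert n a → ℤ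
  | none => 0
  | some x => if x.1 = i₀ then x.2 + 1 else -(x.2 + 1)

end PalmVert

section regularPalm

variable {n k : ℕ}

@[simp]
lemma regularPalm_adj_none_some {i : Fin n} {j : Fin k} :
    (regularPalm n k).Adj none (some ⟨i, j⟩) ↔ (j : ℕ) = 0 :=
  (fromRel_adj _ _ _).trans <| by grind

@[simp]
lemma regularPalm_adj_some_none {i : Fin n} {j : Fin k} :
    (regularPalm n k).Adj (some ⟨i, j⟩) none ↔ (j : ℕ) = 0 :=
  (fromRel_adj _ _ _).trans <| by grind

@[simp]
lemma regularPalm_adj_some_some {i i' : Fin n} {j j' : Fin k} :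
    (regularPalm n k).Adj (some ⟨i, j⟩) (some ⟨i', j'⟩) ↔
      i = i' ∧ ((j' : ℕ) = j + 1 ∨ (j : ℕ) = j' + 1) :=
  (fromRel_adj _ _ _).trans <| by grind

lemma regularPalm_depth_ne_of_adj {u v : PalmVert n fun _ => k}
    (h : (regularPalm n k).Adj u v) : u.depth ≠ v.depth := by
  rcases u with - | ⟨i, j⟩ <;> rcases v with - | ⟨i', j'⟩
  · exact (h.ne rfl).elim
  all_goals simp_all [PalmVert.depth]
  grind

lemma regularPalm_abs_legPotential_sub_le_one (i₀ : Fin n) {u v : PalmVert n fun _ => k}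
    (h : (regularPalm n k).Adj u v) : |u.legPotential i₀ - v.legPotential i₀| ≤ 1 := by
  rcases u with - | ⟨i, j⟩ <;> rcases v with - | ⟨i', j'⟩ <;>
    simp_all [PalmVert.legPotential] <;> split_ifs <;> rw [abs_le] <;> omega

lemma regularPalm_exists_walk_some_some (i : Fin n) {j j' : Fin k} (h : j ≤ j') :
    ∃ p : (regularPalm n k).Walk (some ⟨i, j⟩) (some ⟨i, j'⟩), p.length = j' - j := by
  obtain ⟨j', hj'⟩ := j'
  induction j' with
  | zero =>
    obtain rfl : j = ⟨0, hj'⟩ := le_antisymm h (Nat.zero_le _)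
    exact ⟨.nil, rfl⟩
  | succ j' ih =>
    rcases h.lt_or_eq with hlt | rfl
    · obtain ⟨p, hp⟩ := ih (by omega) (by rw [Fin.lt_def] at hlt; exact Nat.le_of_lt_succ hlt)
      refine ⟨p.concat (regularPalm_adj_some_some.mpr ⟨rfl, Or.inl rfl⟩), ?_⟩
      refine (Walk.length_concat _ _).trans ?_
      rw [Fin.lt_def] at hlt
      simp only at hp hlt ⊢
      omega
    · exact ⟨.nil, (Nat.sub_self _).symm⟩

lemma regularPalm_exists_walk_none_some (i : Fin n) (j : Fin k) :
    ∃ p : (regularPalm n k).Walk none (some ⟨i, j⟩), p.length = j + 1 := by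
  obtain ⟨p, hp⟩ := regularPalm_exists_walk_some_some i (j := ⟨0, j.pos⟩) (Nat.zero_le _)
  refine ⟨.cons (regularPalm_adj_none_some.mpr rfl) p, ?_⟩
  exact (Walk.length_cons _ _).trans (by simp [hp])

lemma regularPalm_connected : (regularPalm n k).Connected := by
  have reach (u : PalmVert n fun _ => k) : (regularPalm n k).Reachable none u := by
    rcases u with - | ⟨i, j⟩
    · rfl
    · exact (regularPalm_exists_walk_none_some i j).elim fun p _ => ⟨p⟩
  exact { preconnected u v := (reach u).symm.trans (reach v), nonempty := ⟨none⟩ }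

lemma regularPalm_dist_none_some (i : Fin n) (j : Fin k) :
    (regularPalm n k).dist none (some ⟨i, j⟩) = j + 1 := by
  obtain ⟨p, hp⟩ := regularPalm_exists_walk_none_some i j
  refine le_antisymm (hp ▸ dist_le p) ?_
  have := (regularPalm_connected none (some ⟨i, j⟩)).abs_sub_le_dist
    fun _ _ => regularPalm_abs_legPotential_sub_le_one i
  simp [PalmVert.legPotential, abs_le] at this
  omega

lemma regularPalm_dist_some_some_le (i : Fin n) {j j' : Fin k} (h : j ≤ j') :
    (regularPalm n k).dist (some ⟨i, j⟩) (some ⟨i, j'⟩) ≤ j' - j := by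
  obtain ⟨p, hp⟩ := regularPalm_exists_walk_some_some i h
  exact hp ▸ dist_le p

lemma regularPalm_dist_some_some_of_ne {i i' : Fin n} (hi : i ≠ i') (j j' : Fin k) :
    (regularPalm n k).dist (some ⟨i, j⟩) (some ⟨i', j'⟩) = j + j' + 2 := by
  refine le_antisymm ?_ ?_
  · calc _ ≤ (regularPalm n k).dist (some ⟨i, j⟩) none +
          (regularPalm n k).dist none (some ⟨i', j'⟩) := regularPalm_connected.dist_triangle
      _ = j + j' + 2 := by
        have := regularPalm_dist_none_some i j
        have := regularPalm_dist_none_some i' j'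
        have := (regularPalm n k).dist_comm (u := some ⟨i, j⟩) (v := none)
        omega
  · have := (regularPalm_connected (some ⟨i, j⟩) (some ⟨i', j'⟩)).abs_sub_le_dist
      fun _ _ => regularPalm_abs_legPotential_sub_le_one i
    simp [PalmVert.legPotential, hi.symm, abs_le] at this
    omega

def regularPalmLegPerm (σ : Equiv.Perm (Fin n)) : regularPalm n k ≃g regularPalm n k where
  toEquiv := Equiv.optionCongr (Equiv.sigmaCongrLeft (β := fun _ => Fin k) σ)
  map_rel_iff' {u v} := by
    rcases u with - | ⟨i, j⟩ <;> rcases v with - | ⟨i', j'⟩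
    · exact Iff.rfl
    · exact regularPalm_adj_none_some.trans regularPalm_adj_none_some.symm
    · exact regularPalm_adj_some_none.trans regularPalm_adj_some_none.symm
    · exact regularPalm_adj_some_some.trans (by simp [regularPalm_adj_some_some])

def legColors {α : Type*} (c : PalmVert n (fun _ => k) → α) (i : Fin n) : Fin k → α :=
  fun j => c (some ⟨i, j⟩)

lemma IsLocatingColoring.injective_legColors (hk : k ≠ 0) {M : ℕ}
    {c : PalmVert n (fun _ => k) → Fin M} (hc : IsLocatingColoring (regularPalm n k) c) :
    Function.Injective (legColors c) := by
  intro i i' h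
  have hswap : c ∘ regularPalmLegPerm (Equiv.swap i i') = c := by
    funext u
    rcases u with - | ⟨a, j⟩
    · rfl
    · change c (some ⟨Equiv.swap i i' a, j⟩) = c (some ⟨a, j⟩)
      rcases eq_or_ne a i with rfl | hai
      · rw [Equiv.swap_apply_left]; exact (congrFun h j).symm
      rcases eq_or_ne a i' with rfl | hai'
      · rw [Equiv.swap_apply_right]; exact congrFun h j
      · rw [Equiv.swap_apply_of_ne_of_ne hai hai']
  have := hc.apply_eq_self_of_comp_eq _ hswap (some ⟨i, ⟨0, Nat.pos_of_ne_zero hk⟩⟩)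
  change (some ⟨Equiv.swap i i' i, _⟩ : PalmVert n fun _ => k) = some ⟨i, _⟩ at this
  rw [Equiv.swap_apply_left] at this
  exact (congrArg Sigma.fst (Option.some_injective _ this)).symm

lemma le_pow_of_isLocatingColoring_regularPalm (hk : k ≠ 0) {M : ℕ}
    {c : PalmVert n (fun _ => k) → Fin M} (hc : IsLocatingColoring (regularPalm n k) c) :
    n ≤ M ^ k := by
  simpa using Fintype.card_le_of_injective _ (hc.injective_legColors hk)

def codeColoring {m : ℕ} (code : Fin n → Fin k → Fin m) :
    PalmVert n (fun _ => k) → Fin (k * m + 1)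
  | none => 0
  | some ⟨i, j⟩ => (finProdFinEquiv (j, code i j)).succ

variable {m : ℕ} {code : Fin n → Fin k → Fin m}

lemma codeColoring_eq_zero_iff {u : PalmVert n fun _ => k} :
    codeColoring code u = 0 ↔ u = none := by
  rcases u with - | ⟨i, j⟩
  · exact iff_of_true rfl rfl
  · exact iff_of_false (Fin.succ_ne_zero _) (Option.some_ne_none _)

lemma codeColoring_eq_some_iff {w : PalmVert n fun _ => k} {i : Fin n} {d : Fin k} :
    codeColoring code w = codeColoring code (some ⟨i, d⟩) ↔
      ∃ i₂, w = some ⟨i₂, d⟩ ∧ code i₂ d = code i d := by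
  rcases w with - | ⟨i₂, j₂⟩
  · exact iff_of_false (Fin.succ_ne_zero _).symm fun ⟨_, h, _⟩ => (Option.some_ne_none _) h.symm
  · change (finProdFinEquiv (j₂, code i₂ j₂)).succ = (finProdFinEquiv (d, code i d)).succ ↔ _
    rw [Fin.succ_inj, finProdFinEquiv.apply_eq_iff_eq, Prod.mk.injEq]
    constructor
    · rintro ⟨rfl, h⟩
      exact ⟨i₂, rfl, h⟩
    · rintro ⟨i₃, h, h'⟩
      obtain ⟨rfl, h⟩ := Sigma.mk.inj_iff.mp (Option.some_injective _ h)
      obtain rfl := eq_of_heq h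
      exact ⟨rfl, h'⟩

lemma depth_eq_of_codeColoring_eq {u v : PalmVert n fun _ => k}
    (h : codeColoring code u = codeColoring code v) : u.depth = v.depth := by
  rcases v with - | ⟨i, j⟩
  · rw [codeColoring_eq_zero_iff.mp h]
  · obtain ⟨i₂, rfl, -⟩ := codeColoring_eq_some_iff.mp h
    rfl

lemma distToSet_codeColoring_preimage_zero (u : PalmVert n fun _ => k) :
    distToSet (regularPalm n k) u (codeColoring code ⁻¹' {0}) = u.depth := by
  have hub : codeColoring code ⁻¹' {0} = {none} := Set.ext fun _ => codeColoring_eq_zero_iff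
  rw [hub]
  refine (distToSet_singleton u none).trans ?_
  rcases u with - | ⟨i, j⟩
  · exact dist_self
  · exact dist_comm.trans (regularPalm_dist_none_some i j)

lemma exists_color_resolving_of_codeColoring {i i' : Fin n} (hcode : code i ≠ code i')
    (j : Fin k) : ∃ t, distToSet (regularPalm n k) (some ⟨i, j⟩) (codeColoring code ⁻¹' {t}) ≠
      distToSet (regularPalm n k) (some ⟨i', j⟩) (codeColoring code ⁻¹' {t}) := by
  obtain ⟨d, hd⟩ := Function.ne_iff.mp hcode
  set S := codeColoring code ⁻¹' {codeColoring code (some ⟨i, d⟩)}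
  have hmem : some ⟨i, d⟩ ∈ S := rfl
  have hsame : (regularPalm n k).dist (some ⟨i, j⟩) (some ⟨i, d⟩) < j + d + 2 := by
    rcases le_total j d with h | h
    · have := regularPalm_dist_some_some_le i h
      omega
    · have := dist_comm.trans_le (regularPalm_dist_some_some_le i h)
      omega
  have hcross : j + d + 2 ≤ distToSet (regularPalm n k) (some ⟨i', j⟩) S := by
    refine le_distToSet ⟨_, hmem⟩ fun w hw => ?_
    obtain ⟨i₂, rfl, h₂⟩ := codeColoring_eq_some_iff.mp hw
    have hi₂ : i' ≠ i₂ := by rintro rfl; exact hd h₂.symm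
    exact (regularPalm_dist_some_some_of_ne hi₂ j d).ge
  exact ⟨_, ((distToSet_le_dist hmem).trans_lt (hsame.trans_le hcross)).ne⟩

lemma isLocatingColoring_codeColoring (hcode : Function.Injective code) :
    IsLocatingColoring (regularPalm n k) (codeColoring code) := by
  refine ⟨fun u v huv h => regularPalm_depth_ne_of_adj huv (depth_eq_of_codeColoring_eq h),
    fun u v huv => ?_⟩
  by_cases hdepth : u.depth = v.depth
  · rcases u with - | ⟨i, j⟩ <;> rcases v with - | ⟨i', j'⟩
    · exact absurd rfl huv
    · simp [PalmVert.depth] at hdepth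
    · simp [PalmVert.depth] at hdepth
    · obtain rfl : j = j' := Fin.ext (by simpa [PalmVert.depth] using hdepth)
      have hi : i ≠ i' := by rintro rfl; exact huv rfl
      exact exists_color_resolving_of_codeColoring (hcode.ne hi) j
  · exact ⟨0, by rwa [distToSet_codeColoring_preimage_zero, distToSet_codeColoring_preimage_zero]⟩

lemma exists_isLocatingColoring_regularPalm (hn : n ≤ m ^ k) :
    ∃ c : PalmVert n (fun _ => k) → Fin (k * m + 1), IsLocatingColoring (regularPalm n k) c := by
  obtain ⟨code⟩ := Function.Embedding.nonempty_of_card_le (α := Fin n) (β := Fin k → Fin m)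
    (by simpa using hn)
  exact ⟨_, isLocatingColoring_codeColoring code.injective⟩

lemma locatingChromaticNumber_regularPalm_le (hn : n ≤ m ^ k) :
    locatingChromaticNumber (regularPalm n k) ≤ k * m + 1 :=
  (exists_isLocatingColoring_regularPalm hn).elim fun _ hc => locatingChromaticNumber_le hc

lemma le_locatingChromaticNumber_regularPalm_pow (hk : k ≠ 0) :
    n ≤ locatingChromaticNumber (regularPalm n k) ^ k := by
  obtain ⟨c, hc⟩ := exists_isLocatingColoring_regularPalm (Nat.le_self_pow hk n)
  obtain ⟨c', hc'⟩ := exists_isLocatingColoring_locatingChromaticNumber hc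
  exact le_pow_of_isLocatingColoring_regularPalm hk hc'

end regularPalm

/-- For every fixed positive integer `k`, `χ_L(S_n(k)) = Θ(n^{1/k})`:
there are constants `A, B > 0` and `N` such that
`A · n^{1/k} ≤ χ_L(S_n(k)) ≤ B · n^{1/k}` for all `n ≥ N`. -/
theorem locatingChromaticNumber_regularPalm_isTheta (k : ℕ) (hk : 1 ≤ k) :
    ∃ (A B : ℝ), 0 < A ∧ 0 < B ∧ ∃ N : ℕ, ∀ n : ℕ, N ≤ n →
      A * (n : ℝ) ^ ((1 : ℝ) / k) ≤ (locatingChromaticNumber (Palm n (fun _ => k)) : ℝ) ∧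
      (locatingChromaticNumber (Palm n (fun _ => k)) : ℝ) ≤ B * (n : ℝ) ^ ((1 : ℝ) / k) := by
  refine ⟨1, 2 * k + 1, one_pos, by positivity, 1, fun n hn => ?_⟩
  have hk0 : k ≠ 0 := by omega
  set x := (n : ℝ) ^ ((1 : ℝ) / k)
  have hx : 1 ≤ x := Real.one_le_rpow (by exact_mod_cast hn) (by positivity)
  have hxk : x ^ k = n := by
    simpa only [x, one_div] using Real.rpow_inv_natCast_pow (Nat.cast_nonneg n) hk0
  set L := locatingChromaticNumber (regularPalm n k)
  constructor
  · rw [one_mul, ← pow_le_pow_iff_left₀ (by positivity) (by positivity) hk0, hxk]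
    exact_mod_cast le_locatingChromaticNumber_regularPalm_pow hk0
  · have hm : n ≤ ⌈x⌉₊ ^ k := by
      have : x ^ k ≤ (⌈x⌉₊ : ℝ) ^ k := pow_le_pow_left₀ (by positivity) (Nat.le_ceil x) k
      exact_mod_cast hxk ▸ this
    have hL : (L : ℝ) ≤ k * ⌈x⌉₊ + 1 := by
      exact_mod_cast locatingChromaticNumber_regularPalm_le hm
    have hceil : (⌈x⌉₊ : ℝ) < x + 1 := Nat.ceil_lt_add_one (by positivity)
    nlinarith
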